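/- arXiv:1310.3504 — 4 statements merged into one kernel-verified Lean document; each statement's English description precedes it below -/
import Mathlib

section
/- Let G be a transitively commutative group with trivial center, and let A1, A2 be two distinct maximal abelian subgroups of G. Then A1 ∩ A2 is trivial. -/
/-- in a transitively commutative group with trivial center, two distinct
maximal abelian subgroups intersect trivially. -/
theorem stmt_10 {G : Type*} [Group G]
    (hTC : ∀ g h k : G, h ∉ Subgroup.center G → g * h = h * g → h * k = k * h →
      g * k = k * g)
    (hZ : Subgroup.center G = ⊥)
    (A₁ A₂ : Subgroup G)
    (hA₁ : (∀ x ∈ A₁, ∀ y ∈ A₁, x * y = y * x) ∧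
      ∀ B : Subgroup G, (∀ x ∈ B, ∀ y ∈ B, x * y = y * x) → A₁ ≤ B → A₁ = B)
    (hA₂ : (∀ x ∈ A₂, ∀ y ∈ A₂, x * y = y * x) ∧
      ∀ B : Subgroup G, (∀ x ∈ B, ∀ y ∈ B, x * y = y * x) → A₂ ≤ B → A₂ = B)
    (hne : A₁ ≠ A₂) : A₁ ⊓ A₂ = ⊥ := by
  by_contra h
  obtain ⟨x, hx, hx1⟩ : ∃ x : G, x ∈ A₁ ⊓ A₂ ∧ x ≠ 1 := by
    by_contra hc
    push_neg at hc
    exact h (le_antisymm (fun y hy => by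
      rcases eq_or_ne y 1 with rfl | hy1
      · exact Subgroup.one_mem _
      · exact absurd hy1 (not_ne_iff.mpr (hc y hy))) bot_le)
  have hxc : x ∉ Subgroup.center G := by
    rw [hZ]; simpa using hx1
  set C := Subgroup.centralizer ({x} : Set G) with hC
  have hCab : ∀ a ∈ C, ∀ b ∈ C, a * b = b * a := by
    intro a ha b hb
    rw [Subgroup.mem_centralizer_iff] at ha hb
    exact hTC a x b hxc (ha x rfl).symm (hb x rfl) 
  have h1 : A₁ ≤ C := by
    intro a ha
    rw [Subgroup.mem_centralizer_iff]
    intro y hy; rw [Set.mem_singleton_iff] at hy; rw [hy]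
    exact hA₁.1 x hx.1 a ha
  have h2 : A₂ ≤ C := by
    intro a ha
    rw [Subgroup.mem_centralizer_iff]
    intro y hy; rw [Set.mem_singleton_iff] at hy; rw [hy]
    exact hA₂.1 x hx.2 a ha
  exact hne ((hA₁.2 C hCab h1).trans (hA₂.2 C hCab h2).symm)
end

section
/- Let the sequence N_r be defined by N_2 = (m_1 - 1)(m_2 - 1) and N_r = m_r · N_{r-1} + (m_r - 1)·(∏_{i=1}^{r-1} m_i − 1) for r ≥ 3, where m_1, ..., m_r are positive integers. Then for all r ≥ 2, N_r = (r−1)·∏_{i=1}^r m_i − Σ_{i=1}^r ∏_{j≠i} m_j + 1. -/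
open Finset

theorem Finset.sum_prod_erase_insert {ι R : Type*} [DecidableEq ι] [CommSemiring R]
    {s : Finset ι} {a : ι} (ha : a ∉ s) (f : ι → R) :
    ∑ i ∈ insert a s, ∏ j ∈ (insert a s).erase i, f j =
      ∏ j ∈ s, f j + f a * ∑ i ∈ s, ∏ j ∈ s.erase i, f j := by
  rw [sum_insert ha, erase_insert ha, mul_sum]
  congr 1
  refine sum_congr rfl fun i hi => ?_
  rw [erase_insert_of_ne (ne_of_mem_of_not_mem hi ha).symm,
    prod_insert fun h => ha (mem_of_mem_erase h)]

theorem Finset.sum_prod_erase_Icc_succ_top {R : Type*} [CommSemiring R] (f : ℕ → R) (r : ℕ) :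
    ∑ i ∈ Icc 1 (r + 1), ∏ j ∈ (Icc 1 (r + 1)).erase i, f j =
      ∏ j ∈ Icc 1 r, f j + f (r + 1) * ∑ i ∈ Icc 1 r, ∏ j ∈ (Icc 1 r).erase i, f j := by
  rw [← insert_Icc_right_eq_Icc_add_one (by omega), sum_prod_erase_insert (by simp)]

theorem stmt_12_general (m : ℕ → ℤ) (N : ℕ → ℤ)
    (hN2 : N 2 = (m 1 - 1) * (m 2 - 1))
    (hNr : ∀ r, 3 ≤ r →
      N r = m r * N (r - 1) + (m r - 1) * ((∏ i ∈ Finset.Icc 1 (r - 1), m i) - 1)) :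
    ∀ r, 2 ≤ r →
      N r = ((r : ℤ) - 1) * (∏ i ∈ Finset.Icc 1 r, m i) -
        (∑ i ∈ Finset.Icc 1 r, ∏ j ∈ (Finset.Icc 1 r).erase i, m j) + 1 := by
  intro r hr
  induction r, hr using Nat.le_induction with
  | base =>
    rw [hN2, sum_prod_erase_Icc_succ_top, prod_Icc_succ_top (by omega)]
    simp only [Icc_self, prod_singleton, sum_singleton, erase_singleton, prod_empty]
    push_cast
    ring
  | succ r hr ih =>
    rw [hNr (r + 1) (by omega), Nat.add_sub_cancel, ih, sum_prod_erase_Icc_succ_top,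
      prod_Icc_succ_top (by omega)]
    push_cast
    ring

/-- the recursively defined sequence `N` with
`N 2 = (m 1 - 1) * (m 2 - 1)` and, for `r ≥ 3`,
`N r = m r * N (r-1) + (m r - 1) * (∏_{i=1}^{r-1} m i - 1)`,
satisfies the closed formula
`N r = (r-1) * ∏_{i=1}^r m i - ∑_{i=1}^r ∏_{j ≠ i} m j + 1` for all `r ≥ 2`. -/
theorem stmt_12 (m : ℕ → ℤ) (hm : ∀ i, 1 ≤ m i) (N : ℕ → ℤ)
    (hN2 : N 2 = (m 1 - 1) * (m 2 - 1))
    (hNr : ∀ r, 3 ≤ r →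
      N r = m r * N (r - 1) + (m r - 1) * ((∏ i ∈ Finset.Icc 1 (r - 1), m i) - 1)) :
    ∀ r, 2 ≤ r →
      N r = ((r : ℤ) - 1) * (∏ i ∈ Finset.Icc 1 r, m i) -
        (∑ i ∈ Finset.Icc 1 r, ∏ j ∈ (Finset.Icc 1 r).erase i, m j) + 1 :=
  stmt_12_general m N hN2 hNr
end

section
/- Let G_1, ..., G_n be finite groups with |G_i| = m_i. The kernel of the canonical surjective homomorphism from the free product G_1 * ... * G_n onto the direct product G_1 × ... × G_n is a free group of rank (n−1)·∏_{i=1}^n m_i − Σ_{i=1}^n ∏_{j≠i} m_j + 1. -/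
/-!
Write `A = ∏ᵢ Gᵢ` and `φ : ∗ᵢ Gᵢ → A` for the canonical map. The words
`τ(a) = a₀ a₁ ⋯ a_{n-1}` form a prefix-closed transversal of `ker φ`, so by Schreier's lemma
`ker φ` is generated by the elements `τ(b) x τ(b x)⁻¹` with `x ∈ Gᵢ`, and each of these is a
quotient of two such elements with `bᵢ = 1`. Those with `bᵢ = 1`, `x ≠ 1` and `bⱼ ≠ 1` for some
`j > i` are a free basis: labelling every `Gᵢ`-edge of the Cayley graph of `A` by its basis
element (the edges of the spanning tree `τ` by `1`) lets `∗ᵢ Gᵢ` act through the wreath product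
`F ≀ A`, `F` the free group on the basis, and reading off labels along closed paths retracts
`ker φ` onto `F`. There are `Σᵢ (mᵢ - 1) ∏_{j ≠ i} mⱼ` edges with `bᵢ = 1`, of which
`Σᵢ (mᵢ - 1) ∏_{j < i} mⱼ = ∏ᵢ mᵢ - 1` lie in the tree.
-/

open Function Finset

lemma Finset.sum_sub_one_mul_prod_lt {ι R : Type*} [LinearOrder ι] [CommRing R] (s : Finset ι)
    (m : ι → R) : ∑ i ∈ s, (m i - 1) * ∏ j ∈ s with j < i, m j = ∏ i ∈ s, m i - 1 := by
  have := prod_add_ordered s (fun _ => (1 : R)) (fun i => m i - 1)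
  simp only [add_sub_cancel, prod_const_one, mul_one] at this
  rw [this, add_sub_cancel_left]

lemma Nat.cast_card_subtype_ne {α : Type*} [Finite α] (a : α) :
    (Nat.card {x : α // x ≠ a} : ℤ) = Nat.card α - 1 := by
  have h := Set.ncard_add_ncard_compl {a}
  rw [Set.ncard_singleton, ← Nat.card_coe_set_eq] at h
  rw [← h]
  push_cast
  change (Nat.card ({a}ᶜ : Set α) : ℤ) = _
  ring

section Pi

variable {ι : Type*} {M : ι → Type*}

lemma Nat.card_pi_forall_eq_one [Fintype ι] [∀ i, One (M i)] (p : ι → Prop) [DecidablePred p] :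
    Nat.card {b : ∀ j, M j // ∀ j, p j → b j = 1} = ∏ j with ¬ p j, Nat.card (M j) := by
  rw [Nat.card_congr (Equiv.subtypePiEquivPi (p := fun j (y : M j) => p j → y = 1)), Nat.card_pi,
    prod_filter]
  refine prod_congr rfl fun j _ => ?_
  by_cases h : p j <;> simp [h]

lemma Nat.cast_card_pi_eq_one_and_exists_lt_ne_one [Fintype ι] [LinearOrder ι] [∀ i, One (M i)]
    [∀ i, Finite (M i)] (i : ι) :
    (Nat.card {b : ∀ j, M j // b i = 1 ∧ ∃ j, i < j ∧ b j ≠ 1} : ℤ) =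
      ∏ j ∈ univ.erase i, (Nat.card (M j) : ℤ) - ∏ j with j < i, (Nat.card (M j) : ℤ) := by
  have hsub : {b : ∀ j, M j | ∀ j, i ≤ j → b j = 1} ⊆ {b | ∀ j, j = i → b j = 1} :=
    fun b hb j hj => hb j hj.ge
  have hdiff : {b : ∀ j, M j | b i = 1 ∧ ∃ j, i < j ∧ b j ≠ 1} =
      {b | ∀ j, j = i → b j = 1} \ {b | ∀ j, i ≤ j → b j = 1} := by
    ext b
    simp only [Set.mem_ofPred_eq, Set.mem_sdiff, forall_eq, not_forall, exists_prop]
    refine and_congr_right fun hbi => exists_congr fun j => ?_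
    exact ⟨fun ⟨hij, hj⟩ => ⟨hij.le, hj⟩,
      fun ⟨hij, hj⟩ => ⟨hij.lt_of_ne (by rintro rfl; exact hj hbi), hj⟩⟩
  have h := Set.ncard_sdiff_add_ncard_of_subset hsub
  rw [← hdiff] at h
  simp only [← Nat.card_coe_set_eq, Set.coe_ofPred, Nat.card_pi_forall_eq_one, not_le,
    filter_ne'] at h
  rw [← Nat.cast_prod, ← Nat.cast_prod, ← h]
  push_cast
  ring

variable [DecidableEq ι] [∀ i, MulOneClass (M i)]

lemma Pi.mul_mulSingle_eq_update (a : ∀ j, M j) (i : ι) (s : M i) :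
    a * Pi.mulSingle i s = update a i (a i * s) := by
  ext j
  rcases eq_or_ne j i with rfl | h
  · simp
  · simp [h]

lemma Pi.update_eq_mul_mulSingle {a : ∀ j, M j} {i : ι} (ha : a i = 1) (x : M i) :
    update a i x = a * Pi.mulSingle i x := by
  rw [Pi.mul_mulSingle_eq_update, ha, one_mul]

lemma Pi.update_one_mul_mulSingle (a : ∀ j, M j) (i : ι) :
    update a i 1 * Pi.mulSingle i (a i) = a := by
  rw [← Pi.update_eq_mul_mulSingle (update_self ..), update_idem, update_eq_self]

end Pi

lemma Fin.pi_induction_update {n : ℕ} {M : Fin n → Type*} [∀ i, One (M i)]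
    {P : (∀ j, M j) → Prop} (one : P 1)
    (step : ∀ a i (x : M i), (∀ j, i ≤ j → a j = 1) → P a → P (update a i x))
    (a : ∀ j, M j) : P a := by
  suffices ∀ k : ℕ, ∀ a : ∀ j, M j, (∀ j : Fin n, k ≤ j → a j = 1) → P a from
    this n a fun j hj => absurd j.isLt (not_lt.mpr hj)
  intro k
  induction k with
  | zero =>
    intro a ha
    convert one
    exact funext fun j => ha j (Nat.zero_le _)
  | succ k ih =>
    intro a ha
    by_cases hk : k < n
    · set i : Fin n := ⟨k, hk⟩
      have hpre : ∀ j, i ≤ j → update a i 1 j = 1 := by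
        intro j hj
        rcases eq_or_ne j i with rfl | hne
        · exact update_self ..
        · rw [update_of_ne hne]
          exact ha j (lt_of_le_of_ne (Fin.le_def.mp hj) (fun h => hne (Fin.ext h.symm)))
      have := step _ i (a i) hpre (ih _ fun j hj => hpre j (Fin.le_def.mpr hj))
      rwa [update_idem, update_eq_self] at this
    · exact ih a fun j hj => absurd j.isLt (by omega)

namespace Monoid.CoprodI

variable {n : ℕ} {G : Fin n → Type*}

section Monoid

variable [∀ i, Monoid (G i)]

variable (G) in
def toPi : CoprodI G →* ∀ i, G i := lift fun i => MonoidHom.mulSingle G i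

@[simp]
lemma toPi_of {i : Fin n} (g : G i) : toPi G (of g) = Pi.mulSingle i g := by
  simp [toPi]

def partialTransversal (a : ∀ j, G j) : ℕ → CoprodI G
  | 0 => 1
  | k + 1 => if h : k < n then partialTransversal a k * of (a ⟨k, h⟩) else partialTransversal a k

def transversal (a : ∀ j, G j) : CoprodI G := partialTransversal a n

lemma partialTransversal_succ (a : ∀ j, G j) (i : Fin n) :
    partialTransversal a (i + 1) = partialTransversal a i * of (a i) := by
  rw [partialTransversal, dif_pos i.isLt]

lemma partialTransversal_congr {a b : ∀ j, G j} {k : ℕ} (h : ∀ j : Fin n, j < k → a j = b j) :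
    partialTransversal a k = partialTransversal b k := by
  induction k with
  | zero => rfl
  | succ k ih =>
    have ih := ih fun j hj => h j (Nat.lt_succ_of_lt hj)
    simp only [partialTransversal]
    split_ifs with hk
    · rw [ih, h ⟨k, hk⟩ (Nat.lt_succ_self k)]
    · exact ih

lemma transversal_eq_partialTransversal {a : ∀ j, G j} {k : ℕ} (hk : k ≤ n)
    (h : ∀ j : Fin n, k ≤ j → a j = 1) : transversal a = partialTransversal a k := by
  suffices ∀ m, k ≤ m → m ≤ n → partialTransversal a m = partialTransversal a k from
    this n hk le_rfl
  intro m hkm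
  induction m, hkm using Nat.le_induction with
  | base => exact fun _ => rfl
  | succ m hkm ih =>
    intro hm
    rw [partialTransversal_succ a ⟨m, hm⟩, h ⟨m, hm⟩ hkm, map_one, mul_one, ih (by omega)]

lemma transversal_one : transversal (1 : ∀ j, G j) = 1 :=
  transversal_eq_partialTransversal (Nat.zero_le n) fun _ _ => rfl

lemma transversal_update {a : ∀ j, G j} {i : Fin n} (x : G i) (ha : ∀ j, i ≤ j → a j = 1) :
    transversal (update a i x) = transversal a * of x := by
  have hx : ∀ j : Fin n, (i : ℕ) + 1 ≤ j → update a i x j = 1 := fun j hj => by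
    rw [update_of_ne (fun h => by rw [h] at hj; omega)]
    exact ha j (Fin.le_def.mpr (by omega))
  rw [transversal_eq_partialTransversal i.isLt hx, partialTransversal_succ, update_self,
    transversal_eq_partialTransversal i.isLt.le ha]
  congr 1
  exact partialTransversal_congr fun j hj => update_of_ne (fun h => by rw [h] at hj; omega) ..

lemma toPi_transversal (a : ∀ j, G j) : toPi G (transversal a) = a := by
  induction a using Fin.pi_induction_update with
  | one => rw [transversal_one, map_one]
  | step a i x ha ih =>
    rw [transversal_update x ha, map_mul, ih, toPi_of, Pi.update_eq_mul_mulSingle (ha i le_rfl)]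

end Monoid

variable [∀ i, Group (G i)]

def schreierGen {i : Fin n} (a : ∀ j, G j) (s : G i) : CoprodI G :=
  transversal a * of s * (transversal (a * Pi.mulSingle i s))⁻¹

lemma schreierGen_mem_ker {i : Fin n} (a : ∀ j, G j) (s : G i) :
    schreierGen a s ∈ (toPi G).ker := by
  rw [MonoidHom.mem_ker, schreierGen, map_mul, map_mul, map_inv, toPi_transversal,
    toPi_transversal, toPi_of, mul_inv_cancel]

lemma transversal_mul_mul_inv_mem {H : Subgroup (CoprodI G)}
    (hH : ∀ a i (s : G i), schreierGen a s ∈ H) (p : CoprodI G) (a : ∀ j, G j) :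
    transversal a * p * (transversal (a * toPi G p))⁻¹ ∈ H := by
  induction p using CoprodI.induction_on generalizing a with
  | one => simp
  | of i s => simpa [schreierGen] using hH a i s
  | mul p q hp hq =>
    convert H.mul_mem (hp a) (hq (a * toPi G p)) using 1
    rw [map_mul, ← mul_assoc a]
    group

lemma schreierGen_one {i : Fin n} (b : ∀ j, G j) : schreierGen b (1 : G i) = 1 := by
  rw [schreierGen, map_one, mul_one, Pi.mulSingle_one, mul_one, mul_inv_cancel]

lemma schreierGen_of_forall_le {i : Fin n} {b : ∀ j, G j} (x : G i)
    (hb : ∀ j, i ≤ j → b j = 1) : schreierGen b x = 1 := by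
  rw [schreierGen, ← Pi.update_eq_mul_mulSingle (hb i le_rfl), transversal_update x hb,
    mul_inv_cancel]

def edgeWord (i : Fin n) (a : ∀ j, G j) : CoprodI G := schreierGen (update a i 1) (a i)

lemma schreierGen_eq_edgeWord_inv_mul {i : Fin n} (a : ∀ j, G j) (s : G i) :
    schreierGen a s = (edgeWord i a)⁻¹ * edgeWord i (a * Pi.mulSingle i s) := by
  have h₁ : update (a * Pi.mulSingle i s) i 1 = update a i 1 := by
    rw [Pi.mul_mulSingle_eq_update, update_idem]
  have h₂ : update a i 1 * Pi.mulSingle i (a i * s) = a * Pi.mulSingle i s := by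
    rw [Pi.mulSingle_mul, ← mul_assoc, Pi.update_one_mul_mulSingle]
  simp only [edgeWord, schreierGen, h₁, Pi.mul_apply, Pi.mulSingle_eq_same, h₂,
    Pi.update_one_mul_mulSingle, map_mul]
  group

variable (G) in
/-- `⟨i, x, b⟩` stands for `schreierGen b x`; the conditions single out one nontrivial
Schreier generator for every edge outside the spanning tree. -/
abbrev SchreierBasis : Type _ :=
  Σ i : Fin n, {x : G i // x ≠ 1} × {b : ∀ j, G j // b i = 1 ∧ ∃ j, i < j ∧ b j ≠ 1}

variable (G) in
noncomputable def schreierBasisMap : FreeGroup (SchreierBasis G) →* CoprodI G :=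
  FreeGroup.lift fun e => schreierGen e.2.2.1 (e.2.1 : G e.1)

lemma schreierBasisMap_of (e : SchreierBasis G) :
    schreierBasisMap G (.of e) = schreierGen e.2.2.1 (e.2.1 : G e.1) :=
  FreeGroup.lift_apply_of ..

lemma edgeWord_mem_range (i : Fin n) (a : ∀ j, G j) :
    edgeWord i a ∈ (schreierBasisMap G).range := by
  by_cases h : a i ≠ 1 ∧ ∃ j, i < j ∧ a j ≠ 1
  · obtain ⟨hai, j, hij, hj⟩ := h
    refine ⟨.of ⟨i, ⟨a i, hai⟩, ⟨update a i 1, update_self .., j, hij, ?_⟩⟩, ?_⟩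
    · rwa [update_of_ne hij.ne']
    · rw [schreierBasisMap_of, edgeWord]
  suffices edgeWord i a = 1 from this ▸ Subgroup.one_mem _
  rw [not_and_or, not_not, not_exists] at h
  rcases h with hai | ha
  · rw [edgeWord, hai, schreierGen_one]
  · refine schreierGen_of_forall_le _ fun j hij => ?_
    rcases hij.eq_or_lt with rfl | hij
    · exact update_self ..
    · rw [update_of_ne hij.ne']
      exact not_not.mp fun hj => ha j ⟨hij, hj⟩

lemma range_schreierBasisMap : (schreierBasisMap G).range = (toPi G).ker := by
  apply le_antisymm
  · rw [MonoidHom.range_le_ker_iff]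
    refine FreeGroup.ext_hom _ _ fun e => ?_
    rw [MonoidHom.comp_apply, schreierBasisMap_of]
    exact schreierGen_mem_ker _ _
  · intro k hk
    have := transversal_mul_mul_inv_mem (H := (schreierBasisMap G).range) (fun a i s => by
      rw [schreierGen_eq_edgeWord_inv_mul]
      exact mul_mem (inv_mem (edgeWord_mem_range ..)) (edgeWord_mem_range ..)) k 1
    rwa [transversal_one, one_mul, one_mul, MonoidHom.mem_ker.mp hk, transversal_one,
      inv_one, mul_one] at this

open Classical in
/-- The free-group counterpart of `edgeWord i a`: the basis element indexing it, or `1` where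
`edgeWord i a = 1` (loops and edges of the spanning tree). -/
noncomputable def edgeLabel (i : Fin n) (a : ∀ j, G j) : FreeGroup (SchreierBasis G) :=
  if h : a i ≠ 1 ∧ ∃ j, i < j ∧ a j ≠ 1 then
    .of ⟨i, ⟨a i, h.1⟩, ⟨update a i 1, update_self .., by
      obtain ⟨j, hij, hj⟩ := h.2
      exact ⟨j, hij, by rwa [update_of_ne hij.ne']⟩⟩⟩
  else 1

lemma edgeLabel_of_apply_eq_one {i : Fin n} {a : ∀ j, G j} (ha : a i = 1) :
    edgeLabel i a = 1 :=
  dif_neg fun h => h.1 ha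

lemma edgeLabel_of_forall_lt {i : Fin n} {a : ∀ j, G j} (ha : ∀ j, i < j → a j = 1) :
    edgeLabel i a = 1 :=
  dif_neg fun ⟨_, j, hij, hj⟩ => hj (ha j hij)

lemma edgeLabel_update {i : Fin n} {x : G i} (hx : x ≠ 1) {b : ∀ j, G j}
    (hb : b i = 1 ∧ ∃ j, i < j ∧ b j ≠ 1) :
    edgeLabel i (update b i x) = .of ⟨i, ⟨x, hx⟩, ⟨b, hb⟩⟩ := by
  obtain ⟨hbi, j, hij, hj⟩ := hb
  rw [edgeLabel, dif_pos ⟨by simpa using hx, j, hij, by rwa [update_of_ne hij.ne']⟩]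
  simp only [update_idem, update_self]
  congr
  rw [← hbi, update_eq_self]

variable (G) in
/-- The action of `CoprodI G` on the Cayley graph of `∀ j, G j`, recording the edge labels read
along paths. The wreath product translates on the left, so a vertex `a` is stored at `a⁻¹`. -/
noncomputable def wreathRep : CoprodI G →* FreeGroup (SchreierBasis G) ≀ᵣ (∀ j, G j) :=
  lift fun i => (MulAut.conj (⟨fun v => edgeLabel i v⁻¹, 1⟩ : _ ≀ᵣ _)⁻¹).toMonoidHom.comp
    (RegularWreathProduct.inl.comp (MonoidHom.mulSingle G i))

lemma right_wreathRep (p : CoprodI G) : (wreathRep G p).right = toPi G p := by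
  suffices RegularWreathProduct.rightHom.comp (wreathRep G) = toPi G from
    DFunLike.congr_fun this p
  ext i s : 2
  simp [wreathRep]

lemma left_wreathRep_mul (p q : CoprodI G) (v : ∀ j, G j) :
    (wreathRep G (p * q)).left v =
      (wreathRep G p).left v * (wreathRep G q).left ((toPi G p)⁻¹ * v) := by
  rw [map_mul, RegularWreathProduct.mul_left, right_wreathRep]
  rfl

lemma left_wreathRep_of {i : Fin n} (s : G i) (a : ∀ j, G j) :
    (wreathRep G (of s)).left a⁻¹ = (edgeLabel i a)⁻¹ * edgeLabel i (a * Pi.mulSingle i s) := by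
  simp [wreathRep]

lemma left_wreathRep_transversal (a : ∀ j, G j) : (wreathRep G (transversal a)).left 1 = 1 := by
  induction a using Fin.pi_induction_update with
  | one => rw [transversal_one, map_one]; rfl
  | step a i x ha ih =>
    have ha' : ∀ j, i < j → (a * Pi.mulSingle i x) j = 1 := fun j hij => by
      rw [Pi.mul_apply, ha j hij.le, Pi.mulSingle_eq_of_ne hij.ne', mul_one]
    rw [transversal_update x ha, left_wreathRep_mul, ih, toPi_transversal, mul_one, one_mul,
      left_wreathRep_of, edgeLabel_of_forall_lt fun j hij => ha j hij.le,
      edgeLabel_of_forall_lt ha', inv_one, one_mul]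

lemma left_wreathRep_transversal_inv (a : ∀ j, G j) :
    (wreathRep G (transversal a)⁻¹).left a⁻¹ = 1 := by
  have h := left_wreathRep_mul (transversal a) (transversal a)⁻¹ 1
  rwa [mul_inv_cancel, left_wreathRep_transversal, toPi_transversal, mul_one, one_mul, map_one,
    eq_comm] at h

lemma left_wreathRep_schreierGen {i : Fin n} (a : ∀ j, G j) (s : G i) :
    (wreathRep G (schreierGen a s)).left 1 =
      (edgeLabel i a)⁻¹ * edgeLabel i (a * Pi.mulSingle i s) := by
  rw [schreierGen, left_wreathRep_mul, left_wreathRep_mul, left_wreathRep_transversal, one_mul,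
    map_mul, toPi_transversal, toPi_of, mul_one, mul_one, left_wreathRep_transversal_inv,
    mul_one, left_wreathRep_of]

variable (G) in
/-- Reading off the labels of the closed path in the Cayley graph traced by an element of the
kernel. -/
noncomputable def kerRetraction : (toPi G).ker →* FreeGroup (SchreierBasis G) where
  toFun k := (wreathRep G k).left 1
  map_one' := by rw [Subgroup.coe_one, map_one]; rfl
  map_mul' k l := by
    rw [Subgroup.coe_mul, left_wreathRep_mul, MonoidHom.mem_ker.mp k.2, inv_one, one_mul]

lemma kerRetraction_schreierBasisMap (w : FreeGroup (SchreierBasis G)) :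
    kerRetraction G ⟨schreierBasisMap G w, range_schreierBasisMap.le ⟨w, rfl⟩⟩ = w := by
  suffices (kerRetraction G).comp ((schreierBasisMap G).codRestrict _
      fun w => range_schreierBasisMap.le ⟨w, rfl⟩) = MonoidHom.id _ from
    DFunLike.congr_fun this w
  ext ⟨i, ⟨x, hx⟩, ⟨b, hbi, hb⟩⟩
  change (wreathRep G (schreierBasisMap G (.of _))).left 1 = _
  rw [schreierBasisMap_of, left_wreathRep_schreierGen, edgeLabel_of_apply_eq_one hbi, inv_one,
    one_mul, ← Pi.update_eq_mul_mulSingle hbi, edgeLabel_update hx ⟨hbi, hb⟩]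
  rfl

variable (G) in
noncomputable def schreierBasisEquivKer : FreeGroup (SchreierBasis G) ≃* (toPi G).ker :=
  MulEquiv.ofBijective
    ((schreierBasisMap G).codRestrict _ fun w => range_schreierBasisMap.le ⟨w, rfl⟩)
    ⟨Function.LeftInverse.injective kerRetraction_schreierBasisMap, fun k => by
      obtain ⟨w, hw⟩ := range_schreierBasisMap.ge k.2
      exact ⟨w, Subtype.ext hw⟩⟩

section Card

variable [∀ j, Finite (G j)]

lemma natCard_schreierBasis :
    (Nat.card (SchreierBasis G) : ℤ) = ((n : ℤ) - 1) * ∏ i, (Nat.card (G i) : ℤ) -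
      ∑ i, ∏ j ∈ univ.erase i, (Nat.card (G j) : ℤ) + 1 := by
  set m : Fin n → ℤ := fun i => Nat.card (G i)
  have hsplit : ∀ i, (m i - 1) * (∏ j ∈ univ.erase i, m j - ∏ j with j < i, m j) =
      (∏ j, m j - ∏ j ∈ univ.erase i, m j) - (m i - 1) * ∏ j with j < i, m j := fun i => by
    rw [← mul_prod_erase _ m (mem_univ i)]
    ring
  rw [Nat.card_sigma, Nat.cast_sum]
  simp only [Nat.card_prod, Nat.cast_mul, Nat.cast_card_subtype_ne,
    Nat.cast_card_pi_eq_one_and_exists_lt_ne_one]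
  rw [sum_congr rfl fun i _ => hsplit i, sum_sub_distrib, sum_sub_one_mul_prod_lt,
    sum_sub_distrib, sum_const, card_univ, Fintype.card_fin, nsmul_eq_mul]
  ring

end Card

end Monoid.CoprodI

/-- the kernel of the canonical surjection from the free product
`G 1 * ⋯ * G n` onto the direct product `G 1 × ⋯ × G n` of finite groups is a free group
of rank `(n-1)·∏ mᵢ − Σᵢ ∏_{j≠i} mⱼ + 1`, where `mᵢ = |G i|`. -/
theorem stmt_13 (n : ℕ) (G : Fin n → Type*) [∀ i, Group (G i)] [∀ i, Fintype (G i)] :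
    ∃ R : ℕ, (R : ℤ) = ((n : ℤ) - 1) * (∏ i, (Fintype.card (G i) : ℤ)) -
        (∑ i, ∏ j ∈ Finset.univ.erase i, (Fintype.card (G j) : ℤ)) + 1 ∧
      Nonempty ((Monoid.CoprodI.lift fun i => MonoidHom.mulSingle G i).ker ≃*
        FreeGroup (Fin R)) := by
  refine ⟨Nat.card (Monoid.CoprodI.SchreierBasis G), ?_, ⟨?_⟩⟩
  · simpa only [Nat.card_eq_fintype_card] using Monoid.CoprodI.natCard_schreierBasis (G := G)
  · exact (Monoid.CoprodI.schreierBasisEquivKer G).symm.trans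
      (FreeGroup.freeGroupCongr (Finite.equivFin _))
end

section
/- Let G be a group and A, B subgroups such that Z(G) < C_G(A) ≤ C_G(B) < G, where C_G(A) denotes the centralizer of A in G. If G is TC (every non-central element has abelian centralizer), then C_G(A) = C_G(B). -/
/-- if `G` is TC (every non-central element has abelian centralizer) and
`A, B` are subgroups with `Z(G) < C_G(A) ≤ C_G(B) < G`, then `C_G(A) = C_G(B)`. -/
theorem stmt_16 {G : Type*} [Group G] (A B : Subgroup G)
    (hTC : ∀ g : G, g ∉ Subgroup.center G →
      ∀ x ∈ Subgroup.centralizer ({g} : Set G), ∀ y ∈ Subgroup.centralizer ({g} : Set G),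
        x * y = y * x)
    (h₁ : Subgroup.center G < Subgroup.centralizer (A : Set G))
    (h₂ : Subgroup.centralizer (A : Set G) ≤ Subgroup.centralizer (B : Set G))
    (h₃ : Subgroup.centralizer (B : Set G) < ⊤) :
    Subgroup.centralizer (A : Set G) = Subgroup.centralizer (B : Set G) := by
  -- pick g ∈ C_G(A) \ Z(G)
  obtain ⟨g, hgA, hgZ⟩ := SetLike.exists_of_lt h₁
  -- pick b ∈ B \ Z(G)
  have hbex : ∃ b ∈ B, b ∉ Subgroup.center G := by
    by_contra h
    push_neg at h
    apply h₃.ne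
    refine le_antisymm h₃.le fun x _ => ?_
    rw [Subgroup.mem_centralizer_iff]
    intro s hs
    exact (Subgroup.mem_center_iff.mp (h s hs) x).symm
  obtain ⟨b, hbB, hbZ⟩ := hbex
  rw [Subgroup.mem_centralizer_iff] at hgA
  -- b commutes with g
  have hgB := Subgroup.mem_centralizer_iff.mp (h₂ (Subgroup.mem_centralizer_iff.mpr hgA))
  have hbg : b ∈ Subgroup.centralizer ({g} : Set G) := by
    rw [Subgroup.mem_centralizer_iff]
    intro s hs
    rw [Set.mem_singleton_iff] at hs; rw [hs]
    exact (hgB b hbB).symm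
  refine le_antisymm h₂ fun y hy => ?_
  rw [Subgroup.mem_centralizer_iff]
  intro a haA
  -- a ∈ C_G(g)
  have hag : a ∈ Subgroup.centralizer ({g} : Set G) := by
    rw [Subgroup.mem_centralizer_iff]
    intro s hs
    rw [Set.mem_singleton_iff] at hs; rw [hs]
    exact (hgA a haA).symm
  -- a commutes with b, so a ∈ C_G(b)
  have hab : a ∈ Subgroup.centralizer ({b} : Set G) := by
    rw [Subgroup.mem_centralizer_iff]
    intro s hs
    rw [Set.mem_singleton_iff] at hs; rw [hs]
    exact hTC g hgZ b hbg a hag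
  -- y ∈ C_G(b)
  have hyb : y ∈ Subgroup.centralizer ({b} : Set G) := by
    rw [Subgroup.mem_centralizer_iff]
    intro s hs
    rw [Set.mem_singleton_iff] at hs; rw [hs]
    exact Subgroup.mem_centralizer_iff.mp hy b hbB
  exact hTC b hbZ a hab y hyb
end
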